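/- Fix a real h_max > 0 and define the truncated function ψ̄(r,h) = ψ*(r, min(h, h_max)). Then for every integer r with 0 ≤ r ≤ m there exists a constant K > 0 (depending on f, r and h_max only) such that |ψ̄(r,h₁) − ψ̄(r,h₂)| ≤ K |h₁ − h₂| for all h₁, h₂ ≥ 0; that is, h ↦ ψ̄(r,h) is K-Lipschitz on [0,∞). -/

import Mathlib

/-! On `[0, h_max]` each tilted moment `μ_r` is antitone, so it lies between `μ_r(h_max) > 0` and
`μ_r(0)`, and it is Lipschitz with constant `μ_{r+1}(0)` because
`|e^{-h₁w} - e^{-h₂w}| ≤ w |h₁ - h₂|`. A quotient of bounded Lipschitz functions whose denominator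
stays away from zero is Lipschitz, and the truncation `h ↦ min h h_max` is 1-Lipschitz. -/

open MeasureTheory Set

/-- The exponentially tilted moment `μ_r(h) = ∫_0^∞ w^r e^{-hw} f(w) dw`. -/
noncomputable def tiltedMoment (f : ℝ → ℝ) (r : ℕ) (h : ℝ) : ℝ :=
  ∫ w in Set.Ioi (0 : ℝ), w ^ r * Real.exp (-h * w) * f w

/-- `ψ*(r,h) = μ_{r+1}(h) / μ_r(h)`. -/
noncomputable def psiStar (f : ℝ → ℝ) (r : ℕ) (h : ℝ) : ℝ :=
  tiltedMoment f (r + 1) h / tiltedMoment f r h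

/-- The truncated function `ψ̄(r,h) = ψ*(r, min(h, h_max))`. -/
noncomputable def psiBar (f : ℝ → ℝ) (hmax : ℝ) (r : ℕ) (h : ℝ) : ℝ :=
  psiStar f r (min h hmax)

lemma abs_exp_neg_sub_exp_neg_le {a b : ℝ} (ha : 0 ≤ a) (hb : 0 ≤ b) :
    |Real.exp (-a) - Real.exp (-b)| ≤ |a - b| := by
  wlog hba : b ≤ a generalizing a b
  · rw [abs_sub_comm, abs_sub_comm a b]
    exact this hb ha (le_of_not_ge hba)
  have hsplit : Real.exp (-a) = Real.exp (-b) * Real.exp (-(a - b)) := by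
    rw [← Real.exp_add]; ring_nf
  have hgap := Real.one_sub_le_exp_neg (a - b)
  have hb_le_one : Real.exp (-b) ≤ 1 := Real.exp_le_one_iff.mpr (by linarith)
  have hanti : Real.exp (-a) ≤ Real.exp (-b) := Real.exp_le_exp.mpr (by linarith)
  rw [abs_of_nonpos (by linarith), abs_of_nonneg (by linarith)]
  nlinarith [Real.exp_pos (-b)]

lemma pow_le_one_add_pow {w : ℝ} (hw : 0 ≤ w) {r M : ℕ} (hr : r ≤ M) : w ^ r ≤ 1 + w ^ M := by
  rcases le_total w 1 with hw1 | hw1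
  · linarith [pow_le_one₀ (n := r) hw hw1, pow_nonneg hw M]
  · linarith [pow_le_pow_right₀ hw1 hr]

lemma abs_div_sub_div_le_of_le {a₁ a₂ b₁ b₂ c : ℝ} (hc : 0 < c) (hb₁ : c ≤ b₁) (hb₂ : c ≤ b₂) :
    |a₁ / b₁ - a₂ / b₂| ≤ (|a₁ - a₂| * b₂ + |a₂| * |b₁ - b₂|) / c ^ 2 := by
  have hb₁pos : 0 < b₁ := hc.trans_le hb₁
  have hb₂pos : 0 < b₂ := hc.trans_le hb₂
  have hnum : |a₁ * b₂ - b₁ * a₂| ≤ |a₁ - a₂| * b₂ + |a₂| * |b₁ - b₂| := by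
    calc |a₁ * b₂ - b₁ * a₂| = |(a₁ - a₂) * b₂ - a₂ * (b₁ - b₂)| := by ring_nf
      _ ≤ |(a₁ - a₂) * b₂| + |a₂ * (b₁ - b₂)| := abs_sub _ _
      _ = |a₁ - a₂| * b₂ + |a₂| * |b₁ - b₂| := by
        rw [abs_mul, abs_mul, abs_of_pos hb₂pos]
  rw [div_sub_div _ _ hb₁pos.ne' hb₂pos.ne', abs_div, abs_of_pos (mul_pos hb₁pos hb₂pos)]
  exact div_le_div₀ (by positivity) hnum (by positivity) (by nlinarith)

section TiltedMoment

variable {f : ℝ → ℝ} {r : ℕ}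

lemma integrableOn_pow_mul_of_le {M : ℕ} (hr : r ≤ M) (hf : IntegrableOn f (Ioi 0))
    (hM : IntegrableOn (fun w => w ^ M * f w) (Ioi 0)) :
    IntegrableOn (fun w => w ^ r * f w) (Ioi 0) := by
  refine Integrable.mono' (hf.norm.add hM.norm)
    ((continuous_pow r).aestronglyMeasurable.mul hf.aestronglyMeasurable) ?_
  filter_upwards [ae_restrict_mem measurableSet_Ioi] with w (hw : 0 < w)
  simp only [Pi.add_apply, norm_mul, norm_pow, Real.norm_of_nonneg hw.le]
  nlinarith [pow_le_one_add_pow hw.le hr, norm_nonneg (f w)]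

lemma integrableOn_tilted {h : ℝ} (hr : IntegrableOn (fun w => w ^ r * f w) (Ioi 0))
    (hh : 0 ≤ h) : IntegrableOn (fun w => w ^ r * Real.exp (-h * w) * f w) (Ioi 0) := by
  have hexp_le : ∀ᵐ w ∂volume.restrict (Ioi 0), ‖Real.exp (-h * w)‖ ≤ 1 := by
    filter_upwards [ae_restrict_mem measurableSet_Ioi] with w (hw : 0 < w)
    rw [Real.norm_of_nonneg (Real.exp_pos _).le, Real.exp_le_one_iff]
    nlinarith
  have hreorder : (fun w => w ^ r * Real.exp (-h * w) * f w)
      = fun w => Real.exp (-h * w) * (w ^ r * f w) := by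
    ext w; ring
  rw [IntegrableOn, hreorder]
  exact hr.bdd_mul (by fun_prop : Continuous fun w => Real.exp (-h * w)).aestronglyMeasurable
    hexp_le

lemma tiltedMoment_nonneg (hf : ∀ w, 0 ≤ f w) (h : ℝ) : 0 ≤ tiltedMoment f r h :=
  setIntegral_nonneg measurableSet_Ioi fun w (hw : 0 < w) => by have := hf w; positivity

lemma tiltedMoment_pos (hf : ∀ w, 0 ≤ f w) (hr : IntegrableOn (fun w => w ^ r * f w) (Ioi 0))
    (hf_pos : 0 < ∫ w in Ioi 0, f w) {h : ℝ} (hh : 0 ≤ h) :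
    0 < tiltedMoment f r h := by
  have hf_int : IntegrableOn f (Ioi 0) := .of_integral_ne_zero hf_pos.ne'
  have hsupp : Function.support (fun w => w ^ r * Real.exp (-h * w) * f w) ∩ Ioi 0
      = Function.support f ∩ Ioi 0 := by
    ext w
    simp only [mem_inter_iff, Function.mem_support, mem_Ioi]
    refine and_congr_left fun hw => ?_
    simp [hw.ne']
  have htilt_nonneg : 0 ≤ᵐ[volume.restrict (Ioi 0)] fun w => w ^ r * Real.exp (-h * w) * f w :=
    ae_restrict_of_forall_mem measurableSet_Ioi fun w (hw : 0 < w) => by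
      have := hf w; positivity
  rw [tiltedMoment, setIntegral_pos_iff_support_of_nonneg_ae htilt_nonneg
    (integrableOn_tilted hr hh), hsupp]
  rwa [← setIntegral_pos_iff_support_of_nonneg_ae (ae_of_all _ hf) hf_int]

lemma tiltedMoment_antitoneOn (hf : ∀ w, 0 ≤ f w)
    (hr : IntegrableOn (fun w => w ^ r * f w) (Ioi 0)) : AntitoneOn (tiltedMoment f r) (Ici 0) := by
  intro h₁ (hh₁ : 0 ≤ h₁) h₂ (hh₂ : 0 ≤ h₂) h12
  refine setIntegral_mono_on (integrableOn_tilted hr hh₂) (integrableOn_tilted hr hh₁)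
    measurableSet_Ioi fun w (hw : 0 < w) => ?_
  have := hf w
  gcongr

lemma abs_tiltedMoment_sub_le (hf : ∀ w, 0 ≤ f w)
    (hr : IntegrableOn (fun w => w ^ r * f w) (Ioi 0))
    (hr' : IntegrableOn (fun w => w ^ (r + 1) * f w) (Ioi 0))
    {h₁ h₂ : ℝ} (hh₁ : 0 ≤ h₁) (hh₂ : 0 ≤ h₂) :
    |tiltedMoment f r h₁ - tiltedMoment f r h₂| ≤ tiltedMoment f (r + 1) 0 * |h₁ - h₂| := by
  have hpointwise : ∀ w ∈ Ioi (0 : ℝ),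
      |w ^ r * Real.exp (-h₁ * w) * f w - w ^ r * Real.exp (-h₂ * w) * f w|
        ≤ w ^ (r + 1) * f w * |h₁ - h₂| := by
    intro w (hw : 0 < w)
    have hexp := abs_exp_neg_sub_exp_neg_le (mul_nonneg hh₁ hw.le) (mul_nonneg hh₂ hw.le)
    rw [← sub_mul, abs_mul, abs_of_pos hw] at hexp
    have := hf w
    calc |w ^ r * Real.exp (-h₁ * w) * f w - w ^ r * Real.exp (-h₂ * w) * f w|
        = |w ^ r * f w * (Real.exp (-(h₁ * w)) - Real.exp (-(h₂ * w)))| := by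
          congr 1; ring_nf
      _ = w ^ r * f w * |Real.exp (-(h₁ * w)) - Real.exp (-(h₂ * w))| := by
          rw [abs_mul, abs_of_nonneg (by positivity)]
      _ ≤ w ^ r * f w * (|h₁ - h₂| * w) := by gcongr
      _ = w ^ (r + 1) * f w * |h₁ - h₂| := by ring
  calc |tiltedMoment f r h₁ - tiltedMoment f r h₂|
      = |∫ w in Ioi 0, (w ^ r * Real.exp (-h₁ * w) * f w - w ^ r * Real.exp (-h₂ * w) * f w)| := by
        rw [tiltedMoment, tiltedMoment,
          integral_sub (integrableOn_tilted hr hh₁) (integrableOn_tilted hr hh₂)]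
    _ ≤ ∫ w in Ioi 0, |w ^ r * Real.exp (-h₁ * w) * f w - w ^ r * Real.exp (-h₂ * w) * f w| :=
        abs_integral_le_integral_abs
    _ ≤ ∫ w in Ioi 0, w ^ (r + 1) * f w * |h₁ - h₂| :=
        setIntegral_mono_on
          ((integrableOn_tilted hr hh₁).sub (integrableOn_tilted hr hh₂)).abs
          (hr'.mul_const _) measurableSet_Ioi hpointwise
    _ = tiltedMoment f (r + 1) 0 * |h₁ - h₂| := by
        simp [tiltedMoment, integral_mul_const]

lemma abs_psiStar_sub_le (hf : ∀ w, 0 ≤ f w)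
    (hf_pos : 0 < ∫ w in Ioi 0, f w)
    (hr : IntegrableOn (fun w => w ^ r * f w) (Ioi 0))
    (hr₁ : IntegrableOn (fun w => w ^ (r + 1) * f w) (Ioi 0))
    (hr₂ : IntegrableOn (fun w => w ^ (r + 2) * f w) (Ioi 0))
    {hmax h₁ h₂ : ℝ} (hh₁ : h₁ ∈ Icc 0 hmax) (hh₂ : h₂ ∈ Icc 0 hmax) :
    |psiStar f r h₁ - psiStar f r h₂| ≤
      (tiltedMoment f (r + 2) 0 * tiltedMoment f r 0 +
        tiltedMoment f (r + 1) 0 * tiltedMoment f (r + 1) 0) /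
        tiltedMoment f r hmax ^ 2 * |h₁ - h₂| := by
  have hmax_nonneg : 0 ≤ hmax := hh₁.1.trans hh₁.2
  have hanti := tiltedMoment_antitoneOn hf hr
  have hanti₁ := tiltedMoment_antitoneOn hf hr₁
  have hden₁ : tiltedMoment f r hmax ≤ tiltedMoment f r h₁ := hanti hh₁.1 hmax_nonneg hh₁.2
  have hden₂ : tiltedMoment f r hmax ≤ tiltedMoment f r h₂ := hanti hh₂.1 hmax_nonneg hh₂.2
  have hden₂_le : tiltedMoment f r h₂ ≤ tiltedMoment f r 0 := hanti self_mem_Ici hh₂.1 hh₂.1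
  have hnum₂_le : |tiltedMoment f (r + 1) h₂| ≤ tiltedMoment f (r + 1) 0 := by
    rw [abs_of_nonneg (tiltedMoment_nonneg hf _)]
    exact hanti₁ self_mem_Ici hh₂.1 hh₂.1
  have hlip := abs_tiltedMoment_sub_le hf hr hr₁ hh₁.1 hh₂.1
  have hlip₁ := abs_tiltedMoment_sub_le hf hr₁ hr₂ hh₁.1 hh₂.1
  calc |psiStar f r h₁ - psiStar f r h₂|
      ≤ (|tiltedMoment f (r + 1) h₁ - tiltedMoment f (r + 1) h₂| * tiltedMoment f r h₂ +
          |tiltedMoment f (r + 1) h₂| * |tiltedMoment f r h₁ - tiltedMoment f r h₂|) /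
          tiltedMoment f r hmax ^ 2 :=
        abs_div_sub_div_le_of_le (tiltedMoment_pos hf hr hf_pos hmax_nonneg) hden₁ hden₂
    _ ≤ (tiltedMoment f (r + 2) 0 * |h₁ - h₂| * tiltedMoment f r 0 +
          tiltedMoment f (r + 1) 0 * (tiltedMoment f (r + 1) 0 * |h₁ - h₂|)) /
          tiltedMoment f r hmax ^ 2 := by
        have hμ₁ := tiltedMoment_nonneg hf (r := r + 1) 0
        have hμ₂ := tiltedMoment_nonneg hf (r := r + 2) 0
        have hb₂ := tiltedMoment_nonneg hf (r := r) h₂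
        gcongr
    _ = _ := by ring

end TiltedMoment

theorem psiBar_lipschitz_general
    (m : ℕ) (f : ℝ → ℝ)
    (hf_nonneg : ∀ w, 0 ≤ f w)
    (hf_prob : ∫ w in Set.Ioi (0 : ℝ), f w = 1)
    (hf_mom : IntegrableOn (fun w => w ^ (m + 2) * f w) (Set.Ioi 0))
    (hmax : ℝ) (hhmax : 0 < hmax) :
    ∀ r : ℕ, r ≤ m → ∃ K > (0 : ℝ),
      ∀ h₁ h₂ : ℝ, 0 ≤ h₁ → 0 ≤ h₂ →
        |psiBar f hmax r h₁ - psiBar f hmax r h₂| ≤ K * |h₁ - h₂| := by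
  intro r hr
  have hf_pos : 0 < ∫ w in Ioi 0, f w := hf_prob ▸ one_pos
  have hmom : ∀ s ≤ m + 2, IntegrableOn (fun w => w ^ s * f w) (Ioi 0) := fun s hs =>
    integrableOn_pow_mul_of_le hs (.of_integral_ne_zero hf_pos.ne') hf_mom
  have hμ_pos : ∀ s ≤ m + 2, ∀ h, 0 ≤ h → 0 < tiltedMoment f s h := fun s hs _ hh =>
    tiltedMoment_pos hf_nonneg (hmom s hs) hf_pos hh
  have hK : 0 < (tiltedMoment f (r + 2) 0 * tiltedMoment f r 0 +
      tiltedMoment f (r + 1) 0 * tiltedMoment f (r + 1) 0) / tiltedMoment f r hmax ^ 2 := by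
    have := hμ_pos r (by omega) 0 le_rfl
    have := hμ_pos (r + 1) (by omega) 0 le_rfl
    have := hμ_pos (r + 2) (by omega) 0 le_rfl
    have := hμ_pos r (by omega) hmax hhmax.le
    positivity
  refine ⟨_, hK, fun h₁ h₂ hh₁ hh₂ => ?_⟩
  calc |psiBar f hmax r h₁ - psiBar f hmax r h₂|
      ≤ _ * |min h₁ hmax - min h₂ hmax| :=
        abs_psiStar_sub_le hf_nonneg hf_pos (hmom r (by omega)) (hmom (r + 1) (by omega))
          (hmom (r + 2) (by omega)) ⟨le_min hh₁ hhmax.le, min_le_right _ _⟩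
          ⟨le_min hh₂ hhmax.le, min_le_right _ _⟩
    _ ≤ _ * |h₁ - h₂| :=
        mul_le_mul_of_nonneg_left (by simpa using abs_min_sub_min_le_max h₁ hmax h₂ hmax) hK.le

/-- for a fixed `h_max > 0` and every `0 ≤ r ≤ m`, the truncated
function `h ↦ ψ̄(r,h) = ψ*(r, min(h,h_max))` is `K`-Lipschitz on `[0,∞)` for
some constant `K > 0`. -/
theorem psiBar_lipschitz
    (m : ℕ) (hm : 1 ≤ m) (f : ℝ → ℝ)
    (hf_meas : Measurable f)
    (hf_nonneg : ∀ w, 0 ≤ f w)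
    (hf_supp : ∀ w, w ≤ 0 → f w = 0)
    (hf_prob : ∫ w in Set.Ioi (0 : ℝ), f w = 1)
    (hf_mom : IntegrableOn (fun w => w ^ (m + 2) * f w) (Set.Ioi 0))
    (hmax : ℝ) (hhmax : 0 < hmax) :
    ∀ r : ℕ, r ≤ m → ∃ K > (0 : ℝ),
      ∀ h₁ h₂ : ℝ, 0 ≤ h₁ → 0 ≤ h₂ →
        |psiBar f hmax r h₁ - psiBar f hmax r h₂| ≤ K * |h₁ - h₂| :=
  psiBar_lipschitz_general m f hf_nonneg hf_prob hf_mom hmax hhmax
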